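/- Let P be an abstract n-polytope whose automorphism group Γ(P) has exactly two orbits on flags. If for some rank i (0 ≤ i ≤ n-1) there exists a flag Φ such that Φ and its i-adjacent flag Φ^i lie in the same Γ(P)-orbit, then for every flag Ψ, the flags Ψ and Ψ^i lie in the same Γ(P)-orbit. -/

import Mathlib

/-- An abstract polytope of rank `n`, presented by a partially ordered type of faces
with a strictly monotone rank function onto `{-1, 0, ..., n}`, such that every flag
(maximal chain) has exactly one face of each rank (`faceAt`), every flag has a unique
`i`-adjacent flag for each `i = 0, ..., n-1` (the diamond condition, via `adj`), and
which is strongly flag-connected. -/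
structure AbstractPolytope (n : ℕ) (Face : Type*) [PartialOrder Face] where
  rank : Face → ℤ
  rank_strictMono : ∀ {F G : Face}, F < G → rank F < rank G
  rank_le : ∀ F : Face, -1 ≤ rank F ∧ rank F ≤ (n : ℤ)
  /-- the unique face of rank `i` in the flag `Φ`, for `-1 ≤ i ≤ n` -/
  faceAt : Flag Face → ℤ → Face
  faceAt_mem : ∀ (Φ : Flag Face) (i : ℤ), -1 ≤ i → i ≤ (n : ℤ) → faceAt Φ i ∈ Φ
  faceAt_rank : ∀ (Φ : Flag Face) (i : ℤ), -1 ≤ i → i ≤ (n : ℤ) → rank (faceAt Φ i) = i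
  faceAt_eq : ∀ (Φ : Flag Face) (F : Face), F ∈ Φ → faceAt Φ (rank F) = F
  /-- the unique `i`-adjacent flag of `Φ`, for `0 ≤ i ≤ n-1` -/
  adj : Flag Face → ℕ → Flag Face
  adj_ne : ∀ (Φ : Flag Face) (i : ℕ), i < n → adj Φ i ≠ Φ
  adj_mem : ∀ (Φ : Flag Face) (i : ℕ), i < n →
    ∀ F ∈ Φ, rank F ≠ (i : ℤ) → F ∈ adj Φ i
  adj_unique : ∀ (Φ Ψ : Flag Face) (i : ℕ), i < n → Ψ ≠ Φ →
    (∀ F ∈ Φ, rank F ≠ (i : ℤ) → F ∈ Ψ) → Ψ = adj Φ i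
  /-- strong flag-connectedness: any two flags are joined by a sequence of successively
  adjacent flags, with all adjacencies at ranks not occurring among their common faces -/
  connected : ∀ Φ Ψ : Flag Face, ∃ (l : ℕ) (c : ℕ → Flag Face), c 0 = Φ ∧ c l = Ψ ∧
    ∀ m < l, ∃ i : ℕ, i < n ∧ c (m + 1) = adj (c m) i ∧
      ∀ F : Face, F ∈ Φ → F ∈ Ψ → rank F ≠ (i : ℤ)

namespace AbstractPolytope

variable {n : ℕ} {Face : Type*} [PartialOrder Face]

/-- The automorphism group `Γ(P)`: order automorphisms of the set of faces.
It acts on flags via `Flag.map`; `g • Φ` denotes the image flag. -/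
instance : MulAction (Face ≃o Face) (Flag Face) where
  smul g Φ := Flag.map g Φ
  one_smul Φ := by
    show Flag.map 1 Φ = Φ
    ext x
    simp [Flag.map, Flag.ofIsMaxChain]
  mul_smul g h Φ := by
    show Flag.map (g * h) Φ = Flag.map g (Flag.map h Φ)
    ext x
    simp [Flag.map, Flag.ofIsMaxChain, Set.image_image]

lemma smul_flag_def (g : Face ≃o Face) (Φ : Flag Face) : g • Φ = Flag.map g Φ := rfl

/-- Two flags lie in the same orbit under the automorphism group. -/
def SameOrbit (Φ Ψ : Flag Face) : Prop := ∃ g : Face ≃o Face, g • Φ = Ψ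

/-- The polytope has exactly two orbits on flags. -/
def TwoOrbit (_A : AbstractPolytope n Face) : Prop :=
  ∃ Φ Ψ : Flag Face, ¬ SameOrbit Φ Ψ ∧ ∀ X : Flag Face, SameOrbit X Φ ∨ SameOrbit X Ψ

/-- `I` is the class type set of the two-orbit polytope `A`: it consists precisely of
those ranks `i ∈ {0,...,n-1}` such that every flag and its `i`-adjacent flag lie in the
same orbit; that is, `A` is in the class `2_I`. -/
def InClass (A : AbstractPolytope n Face) (I : Set ℕ) : Prop :=
  (∀ i ∈ I, i < n) ∧ ∀ i : ℕ, i < n → (i ∈ I ↔ ∀ Φ : Flag Face, SameOrbit Φ (A.adj Φ i))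

/-- The stabilizer in the automorphism group of a face `F`. -/
def faceStab (_A : AbstractPolytope n Face) (F : Face) : Subgroup (Face ≃o Face) where
  carrier := {g : Face ≃o Face | g F = F}
  one_mem' := rfl
  mul_mem' := by
    intro a b ha hb
    show (a * b) F = F
    rw [RelIso.mul_apply]
    rw [show b F = F from hb, show a F = F from ha]
  inv_mem' := by
    intro a ha
    show a⁻¹ F = F
    conv_lhs => rw [← show a F = F from ha]
    exact a.symm_apply_apply F

lemma mem_faceStab {A : AbstractPolytope n Face} {F : Face} {g : Face ≃o Face} :
    g ∈ A.faceStab F ↔ g F = F := Iff.rfl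

end AbstractPolytope


/-!
Automorphisms preserve ranks (a strictly monotone self-map of the finite chain of ranks
`-1, …, n` is the identity), hence commute with `i`-adjacency. So whether `Ψ` and `Ψ^i` share
an orbit depends only on the orbit of `Ψ`. If `Ψ` is not in the orbit of `Φ`, neither is
`Ψ^i`, since `Φ ~ Φ^i` and `i`-adjacency is an involution; with only two orbits, `Ψ` and `Ψ^i`
then both lie in the other one.
-/

namespace AbstractPolytope

variable {n : ℕ} {Face : Type*} [PartialOrder Face]

lemma sameOrbit_equivalence : Equivalence (SameOrbit (Face := Face)) where
  refl Φ := ⟨1, one_smul _ Φ⟩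
  symm := fun ⟨g, hg⟩ => ⟨g⁻¹, by rw [← hg, inv_smul_smul]⟩
  trans := fun ⟨g, hg⟩ ⟨h, hh⟩ => ⟨h * g, by rw [mul_smul, hg, hh]⟩

lemma TwoOrbit.sameOrbit_of_not_sameOrbit {A : AbstractPolytope n Face} (h2 : A.TwoOrbit)
    {X Y Z : Flag Face} (hX : ¬ SameOrbit X Z) (hY : ¬ SameOrbit Y Z) : SameOrbit X Y := by
  have e := sameOrbit_equivalence (Face := Face)
  obtain ⟨Φ, Ψ, -, hall⟩ := h2
  rcases hall Z with hZ | hZ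
  · have hXΨ := (hall X).resolve_left fun h => hX (e.trans h (e.symm hZ))
    have hYΨ := (hall Y).resolve_left fun h => hY (e.trans h (e.symm hZ))
    exact e.trans hXΨ (e.symm hYΨ)
  · have hXΦ := (hall X).resolve_right fun h => hX (e.trans h (e.symm hZ))
    have hYΦ := (hall Y).resolve_right fun h => hY (e.trans h (e.symm hZ))
    exact e.trans hXΦ (e.symm hYΦ)

variable (A : AbstractPolytope n Face)

lemma rank_mono {F G : Face} (h : F ≤ G) : A.rank F ≤ A.rank G :=
  h.eq_or_lt.elim (fun h => h ▸ le_rfl) fun h => (A.rank_strictMono h).le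

lemma lt_of_rank_lt {Φ : Flag Face} {F G : Face} (hF : F ∈ Φ) (hG : G ∈ Φ)
    (h : A.rank F < A.rank G) : F < G :=
  (Φ.le_or_le hF hG).elim
    (fun hle => hle.lt_of_ne fun hFG => h.ne (congrArg A.rank hFG))
    fun hle => absurd (A.rank_mono hle) h.not_ge

lemma eq_of_rank_eq {Φ : Flag Face} {F G : Face} (hF : F ∈ Φ) (hG : G ∈ Φ)
    (h : A.rank F = A.rank G) : F = G := by
  rw [← A.faceAt_eq Φ F hF, ← A.faceAt_eq Φ G hG, h]

abbrev Ranks (n : ℕ) := Set.Icc (-1 : ℤ) n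

lemma faceAt_strictMono (Φ : Flag Face) : StrictMono fun j : Ranks n => A.faceAt Φ j := by
  intro j k hjk
  apply A.lt_of_rank_lt (A.faceAt_mem Φ j j.2.1 j.2.2) (A.faceAt_mem Φ k k.2.1 k.2.2)
  rwa [A.faceAt_rank Φ j j.2.1 j.2.2, A.faceAt_rank Φ k k.2.1 k.2.2]

lemma rank_apply (g : Face ≃o Face) (F : Face) : A.rank (g F) = A.rank F := by
  obtain ⟨Φ, hF⟩ := Flag.exists_mem F
  let σ : Ranks n → Ranks n := fun j => ⟨A.rank (g (A.faceAt Φ j)), A.rank_le _⟩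
  have hσ : StrictMono σ := fun j k hjk =>
    A.rank_strictMono (g.strictMono (A.faceAt_strictMono Φ hjk))
  have hσF := congrArg Subtype.val (hσ.apply_eq (x := ⟨A.rank F, A.rank_le F⟩))
  simpa only [σ, A.faceAt_eq Φ F hF] using hσF

lemma smul_adj (g : Face ≃o Face) (Φ : Flag Face) {i : ℕ} (hi : i < n) :
    g • A.adj Φ i = A.adj (g • Φ) i := by
  refine A.adj_unique _ _ i hi ?_ ?_
  · rw [Ne, smul_left_cancel_iff]
    exact A.adj_ne Φ i hi
  · rintro _ ⟨F, hF, rfl⟩ hrank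
    rw [rank_apply] at hrank
    exact ⟨F, A.adj_mem Φ i hi F hF hrank, rfl⟩

lemma adj_adj (Φ : Flag Face) {i : ℕ} (hi : i < n) : A.adj (A.adj Φ i) i = Φ := by
  refine (A.adj_unique _ _ i hi (A.adj_ne Φ i hi).symm fun F hF hrank => ?_).symm
  have hr := A.rank_le F
  have hΦF := A.faceAt_mem Φ _ hr.1 hr.2
  have hrankΦF := A.faceAt_rank Φ _ hr.1 hr.2
  have hadjF : A.faceAt Φ (A.rank F) ∈ A.adj Φ i :=
    A.adj_mem Φ i hi _ hΦF (by rwa [hrankΦF])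
  rwa [← A.eq_of_rank_eq hadjF hF hrankΦF]

lemma sameOrbit_adj {Φ Ψ : Flag Face} (h : SameOrbit Φ Ψ) {i : ℕ} (hi : i < n) :
    SameOrbit (A.adj Φ i) (A.adj Ψ i) := by
  obtain ⟨g, rfl⟩ := h
  exact ⟨g, A.smul_adj g Φ hi⟩

end AbstractPolytope

open AbstractPolytope in
/-- In a two-orbit polytope, whether a flag and its `i`-adjacent flag lie in
the same orbit is independent of the flag. -/
theorem stmt0 {n : ℕ} {Face : Type*} [PartialOrder Face] (A : AbstractPolytope n Face)
    (h2 : A.TwoOrbit) (i : ℕ) (hi : i < n) (Φ : Flag Face)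
    (hΦ : SameOrbit Φ (A.adj Φ i)) :
    ∀ Ψ : Flag Face, SameOrbit Ψ (A.adj Ψ i) := by
  intro Ψ
  have e := sameOrbit_equivalence (Face := Face)
  by_cases hΨ : SameOrbit Ψ Φ
  · exact e.trans hΨ (e.trans hΦ (A.sameOrbit_adj (e.symm hΨ) hi))
  · have hΨi : ¬ SameOrbit (A.adj Ψ i) Φ := fun h => hΨ <| by
      simpa only [A.adj_adj Ψ hi] using e.trans (A.sameOrbit_adj h hi) (e.symm hΦ)
    exact h2.sameOrbit_of_not_sameOrbit hΨ hΨi
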